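/- arXiv:2112.08454 — 2 statements merged into one kernel-verified Lean document; each statement's English description precedes it below -/
import Mathlib

section
/- Let n ∈ ℕ and let x, y ∈ ℝ^n. Then ⟨x, y⟩ ≤ ‖min{x,y}‖_∞ · (‖x‖₁ + ‖y‖₁), where ⟨x,y⟩ = Σ_{i=1}^n x_i y_i, min{x,y} denotes the coordinatewise minimum of x and y, ‖v‖_∞ = max_i |v_i| and ‖v‖₁ = Σ_i |v_i|. -/
lemma pt_bound (a b : ℝ) : a * b ≤ |min a b| * (|a| + |b|) := by
  have h1 : a * b ≤ |a| * |b| := by rw [← abs_mul]; exact le_abs_self _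
  rcases le_total a b with h | h
  · rw [min_eq_left h]; nlinarith [abs_nonneg a, abs_nonneg b]
  · rw [min_eq_right h]; nlinarith [abs_nonneg a, abs_nonneg b]

/-- Hölder-type bound: `⟨x,y⟩ ≤ ‖min{x,y}‖_∞ · (‖x‖₁ + ‖y‖₁)` for `x, y ∈ ℝ^n`,
where the coordinatewise minimum, the sup-norm and the 1-norm are written explicitly. -/
theorem inner_le_inf_norm_min_mul_add_l1_norms (n : ℕ) (x y : Fin n → ℝ) :
    ∑ i, x i * y i ≤ (⨆ i, |min (x i) (y i)|) * ((∑ i, |x i|) + ∑ i, |y i|) := by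
  set M := ⨆ i, |min (x i) (y i)| with hM
  have hM0 : 0 ≤ M := Real.iSup_nonneg fun i => abs_nonneg _
  have hMi : ∀ i, |min (x i) (y i)| ≤ M := fun i =>
    le_ciSup (Set.Finite.bddAbove (Set.finite_range fun j => |min (x j) (y j)|)) i
  calc ∑ i, x i * y i ≤ ∑ i, M * (|x i| + |y i|) := by
        apply Finset.sum_le_sum
        intro i _
        calc x i * y i ≤ |min (x i) (y i)| * (|x i| + |y i|) := pt_bound _ _
          _ ≤ M * (|x i| + |y i|) := by
              apply mul_le_mul_of_nonneg_right (hMi i)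
              positivity
    _ = M * ((∑ i, |x i|) + ∑ i, |y i|) := by
        rw [← Finset.mul_sum, Finset.sum_add_distrib]
end

section
/- Let Σ be an alphabet and let x, y be strings over Σ, each of length n. Then Σ_{c ∈ Σ} ψ(x)_c · ψ(y)_c ≤ 2n · LCS(x, y). Equivalently, the number of matching pairs (i, j) ∈ [n] × [n] with x_i = y_j is at most 2n times the length of the longest common subsequence of x and y. -/
/-!
Each letter `c` on its own yields the common subsequence `c ^ min (ψ(x)_c, ψ(y)_c)`, so
`min (ψ(x)_c, ψ(y)_c) ≤ LCS(x, y)`. Since `a * b ≤ (a + b) * min a b`, every summand is at most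
`(ψ(x)_c + ψ(y)_c) · LCS(x, y)`, and the counts sum to `|x| + |y| = 2n`.
-/

/-- `LCS x y` is the maximal length of a common subsequence of the strings `x` and `y`. -/
noncomputable def LCS {α : Type*} (x y : List α) : ℕ :=
  sSup {k | ∃ s : List α, s.Sublist x ∧ s.Sublist y ∧ s.length = k}

theorem List.sum_univ_count_eq_length {α : Type*} [DecidableEq α] [Fintype α] (x : List α) :
    ∑ c : α, x.count c = x.length := by
  simpa using Multiset.sum_count_eq_card (s := Finset.univ) (m := (x : Multiset α))
    fun a _ => Finset.mem_univ a

theorem Nat.mul_le_add_mul_min (a b : ℕ) : a * b ≤ (a + b) * min a b := by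
  rcases le_total a b with h | h
  · rw [min_eq_left h]; nlinarith
  · rw [min_eq_right h]; nlinarith

theorem length_le_LCS {α : Type*} {s x y : List α} (hx : s.Sublist x) (hy : s.Sublist y) :
    s.length ≤ LCS x y :=
  le_csSup ⟨x.length, by rintro k ⟨t, htx, -, rfl⟩; exact htx.length_le⟩ ⟨s, hx, hy, rfl⟩

theorem min_count_le_LCS {α : Type*} [DecidableEq α] (x y : List α) (c : α) :
    min (x.count c) (y.count c) ≤ LCS x y := by
  simpa using length_le_LCS (List.replicate_sublist_iff.mpr (min_le_left _ _))
    (List.replicate_sublist_iff.mpr (min_le_right (x.count c) (y.count c)))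

theorem sum_count_mul_count_le_length_add_mul_LCS {α : Type*} [DecidableEq α] [Fintype α]
    (x y : List α) :
    ∑ c : α, x.count c * y.count c ≤ (x.length + y.length) * LCS x y :=
  calc ∑ c : α, x.count c * y.count c
      ≤ ∑ c : α, (x.count c + y.count c) * LCS x y := Finset.sum_le_sum fun c _ =>
        (Nat.mul_le_add_mul_min _ _).trans (Nat.mul_le_mul_left _ (min_count_le_LCS x y c))
    _ = (x.length + y.length) * LCS x y := by
        rw [← Finset.sum_mul, Finset.sum_add_distrib, x.sum_univ_count_eq_length,
          y.sum_univ_count_eq_length]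

/-- For strings `x, y` of length `n` over a finite alphabet, the number of matching pairs,
`∑_c ψ(x)_c · ψ(y)_c`, is at most `2n · LCS(x,y)`. -/
theorem inner_counts_le_two_n_mul_LCS {α : Type*} [DecidableEq α] [Fintype α]
    (n : ℕ) (x y : List α) (hx : x.length = n) (hy : y.length = n) :
    ∑ c : α, x.count c * y.count c ≤ 2 * n * LCS x y := by
  have h := sum_count_mul_count_le_length_add_mul_LCS x y
  rwa [hx, hy, ← two_mul] at h
end
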